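/- For κ > 0 and ρ ∈ (0,1], the MLE slope β₁^mle(κ) = [(S_yy − κS_xx) + √((S_yy − κS_xx)² + 4κρ²S_xxS_yy)]/(2ρ√(S_xxS_yy)) is positive and strictly decreasing in κ, with limit β₁^hor = S_yy/S_xy as κ → 0⁺ and limit β₁^ver = S_xy/S_xx as κ → ∞ (for ρ < 1). -/

import Mathlib

open Filter Topology

/-!
For `κ > 0`, `β = β₁^mle(κ)` is the positive root of `S_xy β² - (S_yy - κ S_xx) β - κ S_xy`,
which equals `(S_xy β² - S_yy β) + κ (S_xx β - S_xy)`. The roots of `a x² - b x - c` with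
`a, c > 0` have opposite signs, so on `x ≥ 0` this quadratic has the sign of `x - β`. At
`x = S_xy / S_xx` it equals `S_xy (S_xy² - S_xx S_yy) / S_xx² < 0` because `ρ < 1`; hence
`S_xx β - S_xy > 0`, so increasing `κ` makes the quadratic positive at the old root and the root
decreases. The limit at `0⁺` is the value `S_yy / S_xy` of the root at `κ = 0`. Substituting
`β = 1 / γ` and dividing by `κ` gives the same equation with `S_xx ↔ S_yy` and `κ ↔ 1 / κ`,
which turns the limit at `∞` into the reciprocal of the limit at `0⁺`.
-/

noncomputable def posRoot (a b c : ℝ) : ℝ := (b + √(b ^ 2 + 4 * a * c)) / (2 * a)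

section PosRoot

variable {a b c : ℝ}

lemma quadratic_eq_mul_sub_posRoot (ha : 0 < a) (hc : 0 ≤ c) (x : ℝ) :
    a * x ^ 2 - b * x - c =
      a * (x - posRoot a b c) * (x - (b - √(b ^ 2 + 4 * a * c)) / (2 * a)) := by
  have hD := Real.sq_sqrt (by positivity : 0 ≤ b ^ 2 + 4 * a * c)
  rw [posRoot]
  generalize √(b ^ 2 + 4 * a * c) = s at hD ⊢
  field_simp
  linear_combination hD

lemma posRoot_isRoot (ha : 0 < a) (hc : 0 ≤ c) :
    a * posRoot a b c ^ 2 - b * posRoot a b c - c = 0 := by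
  rw [quadratic_eq_mul_sub_posRoot ha hc, sub_self, mul_zero, zero_mul]

lemma exists_pos_quadratic_eq_mul_sub_posRoot (ha : 0 < a) (hc : 0 < c) {x : ℝ} (hx : 0 ≤ x) :
    ∃ k > 0, a * x ^ 2 - b * x - c = k * (x - posRoot a b c) := by
  have hD := Real.sq_sqrt (by positivity : 0 ≤ b ^ 2 + 4 * a * c)
  have hb : b < √(b ^ 2 + 4 * a * c) := by
    nlinarith [Real.sqrt_nonneg (b ^ 2 + 4 * a * c), mul_pos ha hc]
  have hneg : (b - √(b ^ 2 + 4 * a * c)) / (2 * a) < 0 :=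
    div_neg_of_neg_of_pos (by linarith) (by positivity)
  refine ⟨a * (x - (b - √(b ^ 2 + 4 * a * c)) / (2 * a)), by nlinarith, ?_⟩
  rw [quadratic_eq_mul_sub_posRoot ha hc.le]
  ring

lemma lt_posRoot_iff (ha : 0 < a) (hc : 0 < c) {x : ℝ} (hx : 0 ≤ x) :
    x < posRoot a b c ↔ a * x ^ 2 - b * x - c < 0 := by
  obtain ⟨k, hk, h⟩ := exists_pos_quadratic_eq_mul_sub_posRoot (b := b) ha hc hx
  rw [h, ← sub_neg]
  exact ⟨mul_neg_of_pos_of_neg hk, fun h' => by nlinarith⟩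

lemma posRoot_lt_iff (ha : 0 < a) (hc : 0 < c) {x : ℝ} (hx : 0 ≤ x) :
    posRoot a b c < x ↔ 0 < a * x ^ 2 - b * x - c := by
  obtain ⟨k, hk, h⟩ := exists_pos_quadratic_eq_mul_sub_posRoot (b := b) ha hc hx
  rw [h, mul_pos_iff_of_pos_left hk, sub_pos]

lemma eq_posRoot (ha : 0 < a) (hc : 0 < c) {x : ℝ} (hx : 0 ≤ x)
    (hroot : a * x ^ 2 - b * x - c = 0) : x = posRoot a b c := by
  obtain ⟨k, hk, h⟩ := exists_pos_quadratic_eq_mul_sub_posRoot (b := b) ha hc hx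
  rw [h] at hroot
  exact sub_eq_zero.1 ((mul_eq_zero.1 hroot).resolve_left hk.ne')

lemma posRoot_pos (ha : 0 < a) (hc : 0 < c) : 0 < posRoot a b c :=
  (lt_posRoot_iff ha hc le_rfl).2 (by simpa using hc)

lemma posRoot_mul {t : ℝ} (ht : 0 < t) (ha : 0 < a) (hc : 0 < c) :
    posRoot (t * a) (t * b) (t * c) = posRoot a b c :=
  (eq_posRoot (mul_pos ht ha) (mul_pos ht hc) (posRoot_pos ha hc).le
    (by linear_combination t * posRoot_isRoot (b := b) ha hc.le)).symm

lemma posRoot_eq_inv (ha : 0 < a) (hc : 0 < c) : posRoot a b c = (posRoot c (-b) a)⁻¹ := by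
  have hy := posRoot_pos (b := -b) hc ha
  have hroot := posRoot_isRoot (b := -b) hc ha.le
  refine (eq_posRoot ha hc (inv_nonneg.2 hy.le) ?_).symm
  field_simp
  linear_combination -hroot

lemma posRoot_zero_right (hb : 0 ≤ b) : posRoot a b 0 = b / a := by
  rw [posRoot, mul_zero, add_zero, Real.sqrt_sq hb, ← two_mul, mul_div_mul_left _ _ two_ne_zero]

lemma tendsto_posRoot_zero {p : ℝ} (hp : 0 ≤ p) (q r : ℝ) :
    Tendsto (fun t => posRoot a (p - t * q) (t * r)) (𝓝 0) (𝓝 (p / a)) := by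
  have hcont : ContinuousAt (fun t => posRoot a (p - t * q) (t * r)) 0 := by
    unfold posRoot
    fun_prop
  simpa [posRoot_zero_right hp] using hcont.tendsto

end PosRoot

/-- `β₁^mle(κ)`, with `ρ √(S_xx S_yy)` written as `S_xy`. -/
noncomputable def mleSlope (Sxx Syy Sxy κ : ℝ) : ℝ := posRoot Sxy (Syy - κ * Sxx) (κ * Sxy)

section MleSlope

variable {Sxx Syy Sxy : ℝ}

lemma mleSlope_pos (hSxy : 0 < Sxy) {κ : ℝ} (hκ : 0 < κ) : 0 < mleSlope Sxx Syy Sxy κ :=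
  posRoot_pos hSxy (mul_pos hκ hSxy)

lemma div_lt_mleSlope (hSxx : 0 < Sxx) (hSxy : 0 < Sxy) (hcorr : Sxy ^ 2 < Sxx * Syy) {κ : ℝ}
    (hκ : 0 < κ) : Sxy / Sxx < mleSlope Sxx Syy Sxy κ := by
  rw [mleSlope, lt_posRoot_iff hSxy (mul_pos hκ hSxy) (by positivity)]
  have heval : Sxy * (Sxy / Sxx) ^ 2 - (Syy - κ * Sxx) * (Sxy / Sxx) - κ * Sxy =
      Sxy * (Sxy ^ 2 - Sxx * Syy) / Sxx ^ 2 := by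
    field_simp
    ring
  rw [heval]
  exact div_neg_of_neg_of_pos (mul_neg_of_pos_of_neg hSxy (by linarith)) (by positivity)

lemma mleSlope_strictAntiOn (hSxx : 0 < Sxx) (hSxy : 0 < Sxy) (hcorr : Sxy ^ 2 < Sxx * Syy) :
    StrictAntiOn (mleSlope Sxx Syy Sxy) (Set.Ioi 0) := by
  intro κ₁ hκ₁ κ₂ hκ₂ hlt
  have hroot := posRoot_isRoot (b := Syy - κ₁ * Sxx) hSxy (mul_pos hκ₁ hSxy).le
  have hbound := div_lt_mleSlope hSxx hSxy hcorr hκ₁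
  rw [div_lt_iff₀' hSxx] at hbound
  unfold mleSlope at hbound ⊢
  rw [posRoot_lt_iff hSxy (mul_pos hκ₂ hSxy) (posRoot_pos hSxy (mul_pos hκ₁ hSxy)).le]
  -- raising `κ` adds `(κ₂ - κ₁) (S_xx β - S_xy)` to the quadratic at its old root `β`
  nlinarith [mul_pos (sub_pos.2 hlt) (sub_pos.2 hbound)]

lemma mleSlope_eq_inv_swap (hSxy : 0 < Sxy) {κ : ℝ} (hκ : 0 < κ) :
    mleSlope Sxx Syy Sxy κ = (mleSlope Syy Sxx Sxy κ⁻¹)⁻¹ := by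
  rw [mleSlope, mleSlope, posRoot_eq_inv hSxy (mul_pos hκ hSxy),
    ← posRoot_mul hκ hSxy (mul_pos (inv_pos.2 hκ) hSxy)]
  congr 2
  · rw [mul_sub, mul_inv_cancel_left₀ hκ.ne']
    ring
  · rw [mul_inv_cancel_left₀ hκ.ne']

lemma tendsto_mleSlope_zero (hSyy : 0 < Syy) :
    Tendsto (mleSlope Sxx Syy Sxy) (𝓝[>] 0) (𝓝 (Syy / Sxy)) :=
  (tendsto_posRoot_zero hSyy.le Sxx Sxy).mono_left nhdsWithin_le_nhds

lemma tendsto_mleSlope_atTop (hSxx : 0 < Sxx) (hSxy : 0 < Sxy) :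
    Tendsto (mleSlope Sxx Syy Sxy) atTop (𝓝 (Sxy / Sxx)) := by
  have hswap : Tendsto (fun κ => (mleSlope Syy Sxx Sxy κ⁻¹)⁻¹) atTop (𝓝 (Sxx / Sxy)⁻¹) :=
    ((tendsto_mleSlope_zero hSxx).comp tendsto_inv_atTop_nhdsGT_zero).inv₀ (by positivity)
  rw [inv_div] at hswap
  refine hswap.congr' ?_
  filter_upwards [eventually_gt_atTop 0] with κ hκ
  exact (mleSlope_eq_inv_swap hSxy hκ).symm

lemma slope_formula_eq_mleSlope (hS : 0 ≤ Sxx * Syy) {ρ : ℝ} (hρ : ρ * √(Sxx * Syy) = Sxy)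
    (κ : ℝ) :
    ((Syy - κ * Sxx) + √((Syy - κ * Sxx) ^ 2 + 4 * κ * ρ ^ 2 * Sxx * Syy)) /
        (2 * ρ * √(Sxx * Syy)) = mleSlope Sxx Syy Sxy κ := by
  have hρ2 : ρ ^ 2 * (Sxx * Syy) = Sxy ^ 2 := by
    rw [← hρ, mul_pow, Real.sq_sqrt hS]
  rw [mleSlope, posRoot, mul_assoc 2, hρ]
  congr 3
  linear_combination 4 * κ * hρ2

end MleSlope

/-- For `κ > 0` and `ρ ∈ (0,1)`, the MLE slope `β₁^mle(κ)` is positive and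
strictly decreasing in `κ`, with limit `β₁^hor = S_yy/S_xy` as `κ → 0⁺` and limit
`β₁^ver = S_xy/S_xx` as `κ → ∞`. -/
theorem mle_monotone_limits
    (Sxx Syy Sxy : ℝ) (hSxx : 0 < Sxx) (hSyy : 0 < Syy) (hSxy : 0 < Sxy)
    (ρ : ℝ) (hρ : ρ = Sxy / Real.sqrt (Sxx * Syy)) (hρmem : ρ ∈ Set.Ioo (0 : ℝ) 1)
    (mle : ℝ → ℝ)
    (hmle : ∀ κ : ℝ, mle κ =
      ((Syy - κ * Sxx) + Real.sqrt ((Syy - κ * Sxx) ^ 2 + 4 * κ * ρ ^ 2 * Sxx * Syy)) /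
        (2 * ρ * Real.sqrt (Sxx * Syy))) :
    (∀ κ : ℝ, 0 < κ → 0 < mle κ) ∧
      StrictAntiOn mle (Set.Ioi 0) ∧
      Tendsto mle (nhdsWithin 0 (Set.Ioi 0)) (nhds (Syy / Sxy)) ∧
      Tendsto mle atTop (nhds (Sxy / Sxx)) := by
  have hS : 0 < Sxx * Syy := mul_pos hSxx hSyy
  have hρS : ρ * √(Sxx * Syy) = Sxy := by
    rw [hρ, div_mul_cancel₀ _ (Real.sqrt_pos.2 hS).ne']
  have hcorr : Sxy ^ 2 < Sxx * Syy := by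
    rw [← hρS, mul_pow, Real.sq_sqrt hS.le]
    exact mul_lt_of_lt_one_left hS (pow_lt_one₀ hρmem.1.le hρmem.2 two_ne_zero)
  obtain rfl : mle = mleSlope Sxx Syy Sxy :=
    funext fun κ => (hmle κ).trans (slope_formula_eq_mleSlope hS.le hρS κ)
  exact ⟨fun _ hκ => mleSlope_pos hSxy hκ, mleSlope_strictAntiOn hSxx hSxy hcorr,
    tendsto_mleSlope_zero hSyy, tendsto_mleSlope_atTop hSxx hSxy⟩
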